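/- Let n ≥ 1, k ≥ 1, and α = (a_1,…,a_n) ∈ [n]^n. Then the following are equivalent: (i) every maximal interval [p,q] of U_α satisfies q−p+1 ≤ k; (ii) for every permutation σ of [n], the rearrangement σ(α) := (a_{σ(1)},…,a_{σ(n)}) is a k-Naples parking function of length n. -/

import Mathlib

open Finset

/-- The spot where a single car parks on a one-way street with spots `1,…,n`:
`occ` is the set of already occupied spots, `p` is the car's preference, and
`r` is its backward allowance (it follows the `r`-Naples rule).  If spot `p`
is free the car parks there; otherwise it checks spots `p-1, p-2, …, max (p-r) 1`
and parks in the first free one among these; otherwise it parks in the smallest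
free spot `> p` (and `≤ n`); `none` means the car fails to park. -/
def parkSpot (n : ℕ) (occ : Finset ℕ) (p r : ℕ) : Option ℕ :=
  if p ∈ occ then
    if hb : ((Finset.Ico (max 1 (p - r)) p).filter (fun j => j ∉ occ)).Nonempty then
      some (((Finset.Ico (max 1 (p - r)) p).filter (fun j => j ∉ occ)).max' hb)
    else if hf : ((Finset.Ioc p n).filter (fun j => j ∉ occ)).Nonempty then
      some (((Finset.Ioc p n).filter (fun j => j ∉ occ)).min' hf)
    else none
  else some p

/-- The set of occupied spots after the first `i` of the `m` cars (with
preferences `a` and backward allowances `r`) have attempted to park on a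
street with `n` spots. -/
def occUpTo (n m : ℕ) (a r : Fin m → ℕ) : ℕ → Finset ℕ
  | 0 => ∅
  | i + 1 =>
    let occ := occUpTo n m a r i
    if h : i < m then
      match parkSpot n occ (a ⟨i, h⟩) (r ⟨i, h⟩) with
      | some s => insert s occ
      | none => occ
    else occ

/-- The outcome map: the spot where car `c_i` parks (`none` if it fails to park),
when the `m` cars with preferences `a` park on `n` spots, car `c_i` following
the `r i`-Naples rule. -/
def outcome (n m : ℕ) (a r : Fin m → ℕ) (i : Fin m) : Option ℕ :=
  parkSpot n (occUpTo n m a r i.val) (a i) (r i)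

/-- The outcome map with values in `ℕ∞`: failure to park is recorded as `∞`. -/
def outcomeE (n m : ℕ) (a r : Fin m → ℕ) (i : Fin m) : ENat :=
  (outcome n m a r i).elim ⊤ (fun s => (s : ENat))

/-- All `m` cars (preferences `a`, car `c_i` following the `r i`-Naples rule)
are able to park on the street with `n` spots.  For `m = n` this says that `r`
is a parking strategy for `a`, i.e. `(a, r) ∈ PR_n`. -/
def AllPark (n m : ℕ) (a r : Fin m → ℕ) : Prop :=
  ∀ i : Fin m, (outcome n m a r i).isSome

instance (n m : ℕ) (a r : Fin m → ℕ) : Decidable (AllPark n m a r) := by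
  unfold AllPark; infer_instance

/-- `a ∈ PF_{n,k}`: `a` is a `k`-Naples parking function of length `n`. -/
def NaplesPF (n k : ℕ) (a : Fin n → ℕ) : Prop :=
  AllPark n n a (fun _ => k)

instance (n k : ℕ) (a : Fin n → ℕ) : Decidable (NaplesPF n k a) := by
  unfold NaplesPF; infer_instance

/-- `a ∈ PF_n`: `a` is a (standard) parking function of length `n`. -/
def IsPF (n : ℕ) (a : Fin n → ℕ) : Prop := NaplesPF n 0 a

instance (n : ℕ) (a : Fin n → ℕ) : Decidable (IsPF n a) := by
  unfold IsPF; infer_instance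

/-- `u_α(j) = Σ_{i=j}^n |α|_i − (n−j+1) = #{i : a_i ≥ j} − (n−j+1)`. -/
def ucount (n : ℕ) (a : Fin n → ℕ) (j : ℕ) : ℤ :=
  ((Finset.univ.filter (fun i : Fin n => j ≤ a i)).card : ℤ) - ((n : ℤ) - (j : ℤ) + 1)

/-- `U_α = {j ∈ [n] : u_α(j) ≥ 1}`. -/
def Uset (n : ℕ) (a : Fin n → ℕ) : Finset ℕ :=
  (Finset.Icc 1 n).filter (fun j => 1 ≤ ucount n a j)

/-- A parking preference of length `n` is complete if `U_α = {2,…,n}`. -/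
def Complete (n : ℕ) (a : Fin n → ℕ) : Prop :=
  Uset n a = Finset.Icc 2 n

instance (n : ℕ) (a : Fin n → ℕ) : Decidable (Complete n a) := by
  unfold Complete; infer_instance

/-- `[p,q]` is a maximal interval of `U_α`. -/
def MaxInterval (n : ℕ) (a : Fin n → ℕ) (p q : ℕ) : Prop :=
  p ≤ q ∧ (∀ j, p ≤ j → j ≤ q → j ∈ Uset n a) ∧ p - 1 ∉ Uset n a ∧ q + 1 ∉ Uset n a

/-!
If a car of some rearrangement `b` of `α` fails to park, every spot from `max 1 (b_i - k)` to `n`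
is taken; let `[M, n]` be the longest taken final segment. A car parked in `[M, n]` either
prefers a spot at least as large as the one it took, or it drove forward after finding its whole
backward window taken, and then it prefers a spot `≥ M + k`. Together with the failed car this
gives `u(j) ≥ 1` for all `j ∈ [M, M + k]`, so `U_α` has a maximal interval of length `> k`.

Conversely, if `[p, q]` is a maximal interval with `q - p + 1 > k`, then exactly `n - p + 2` cars
prefer spots `≥ p` (as `p ∈ U_α` and `p - 1 ∉ U_α`), and for `d < q` at most `d - p + 1` of them
prefer spots in `[p, d]` (as `d + 1 ∈ U_α`). Let these cars park first, in nondecreasing order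
of preference. Each of them parks in `[p, n]`: either its backward window lies above `p`, or its
preference is `d < p + k ≤ q`, so fewer than `d - p + 1` spots are taken and one of `[p, d]` is
free. But `n - p + 2` cars do not fit into `n - p + 1` spots.
-/

section ParkSpot

variable {n r p s j : ℕ} {occ : Finset ℕ}

theorem notMem_of_parkSpot_eq_some (h : parkSpot n occ p r = some s) : s ∉ occ := by
  unfold parkSpot at h
  split_ifs at h with hp hb hf <;> obtain rfl := Option.some.inj h
  · exact (mem_filter.mp (max'_mem _ hb)).2
  · exact (mem_filter.mp (min'_mem _ hf)).2
  · exact hp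

theorem mem_Icc_of_parkSpot_eq_some (hp : p ∈ Icc 1 n) (h : parkSpot n occ p r = some s) :
    s ∈ Icc (max 1 (p - r)) n := by
  unfold parkSpot at h
  rw [mem_Icc] at hp ⊢
  split_ifs at h with hpo hb hf <;> obtain rfl := Option.some.inj h
  · have := (mem_Ico.mp (mem_filter.mp (max'_mem _ hb)).1); omega
  · have := (mem_Ioc.mp (mem_filter.mp (min'_mem _ hf)).1); omega
  · omega

theorem le_of_parkSpot_eq_some (h : parkSpot n occ p r = some s)
    (hj : j ∈ Icc (max 1 (p - r)) p) (hjo : j ∉ occ) : j ≤ s := by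
  unfold parkSpot at h
  rw [mem_Icc] at hj
  split_ifs at h with hp hb hf <;> obtain rfl := Option.some.inj h
  · have hjp : j ≠ p := by rintro rfl; exact hjo hp
    exact le_max' _ j (mem_filter.mpr ⟨mem_Ico.mpr ⟨hj.1, by omega⟩, hjo⟩)
  · have hjp : j ≠ p := by rintro rfl; exact hjo hp
    exact absurd ⟨j, mem_filter.mpr ⟨mem_Ico.mpr ⟨hj.1, by omega⟩, hjo⟩⟩ hb
  · exact hj.2

theorem Ico_subset_of_parkSpot_eq_some_of_lt (h : parkSpot n occ p r = some s) (hps : p < s) :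
    Ico (max 1 (p - r)) s ⊆ occ := by
  unfold parkSpot at h
  split_ifs at h with hp hb hf <;> obtain rfl := Option.some.inj h
  · exact absurd (mem_Ico.mp (mem_filter.mp (max'_mem _ hb)).1).2 hps.not_gt
  · intro j hj
    rw [mem_Ico] at hj
    by_contra hjo
    rcases lt_trichotomy j p with hjp | rfl | hjp
    · exact hb ⟨j, mem_filter.mpr ⟨mem_Ico.mpr ⟨hj.1, hjp⟩, hjo⟩⟩
    · exact hjo hp
    · have hjn : j ≤ n := hj.2.le.trans (mem_Ioc.mp (mem_filter.mp (min'_mem _ hf)).1).2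
      exact hj.2.not_ge (min'_le _ j (mem_filter.mpr ⟨mem_Ioc.mpr ⟨hjp, hjn⟩, hjo⟩))
  · exact absurd hps (lt_irrefl _)

theorem Icc_subset_of_parkSpot_eq_none (h : parkSpot n occ p r = none) :
    Icc (max 1 (p - r)) n ⊆ occ := by
  unfold parkSpot at h
  split_ifs at h with hp hb hf
  intro j hj
  rw [mem_Icc] at hj
  by_contra hjo
  rcases lt_trichotomy j p with hjp | rfl | hjp
  · exact hb ⟨j, mem_filter.mpr ⟨mem_Ico.mpr ⟨hj.1, hjp⟩, hjo⟩⟩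
  · exact hjo hp
  · exact hf ⟨j, mem_filter.mpr ⟨mem_Ioc.mpr ⟨hjp, hj.2⟩, hjo⟩⟩

theorem parkSpot_mem_Icc_of_card_add_le {n r l d s : ℕ} {occ : Finset ℕ} (hl : 1 ≤ l)
    (hd : d ∈ Icc l n) (hroom : d < l + r → #occ + l ≤ d) (h : parkSpot n occ d r = some s) :
    s ∈ Icc l n := by
  rw [mem_Icc] at hd
  have hs := mem_Icc.mp (mem_Icc_of_parkSpot_eq_some (mem_Icc.mpr ⟨by omega, hd.2⟩) h)
  refine mem_Icc.mpr ⟨?_, hs.2⟩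
  by_cases hdr : l + r ≤ d
  · exact le_trans (by omega) ((le_max_right _ _).trans hs.1)
  · obtain ⟨j, hj, hjo⟩ : ∃ j ∈ Icc l d, j ∉ occ := by
      by_contra! hall
      have := card_le_card (show Icc l d ⊆ occ from hall)
      rw [Nat.card_Icc] at this
      omega
    have hj' : j ∈ Icc (max 1 (d - r)) d := by
      rw [mem_Icc] at hj ⊢
      exact ⟨max_le (by omega) (by omega), hj.2⟩
    exact (mem_Icc.mp hj).1.trans (le_of_parkSpot_eq_some h hj' hjo)

end ParkSpot

section OccUpTo

variable {n m : ℕ} {a r : Fin m → ℕ}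

theorem occUpTo_succ_of_lt {i : ℕ} (h : i < m) :
    occUpTo n m a r (i + 1) = occUpTo n m a r i ∪ (outcome n m a r ⟨i, h⟩).toFinset := by
  rw [occUpTo, dif_pos h, outcome]
  cases parkSpot n (occUpTo n m a r i) (a ⟨i, h⟩) (r ⟨i, h⟩) <;> simp

theorem occUpTo_succ_of_le {i : ℕ} (h : m ≤ i) : occUpTo n m a r (i + 1) = occUpTo n m a r i := by
  rw [occUpTo, dif_neg h.not_gt]

theorem mem_occUpTo_iff {T s : ℕ} :
    s ∈ occUpTo n m a r T ↔ ∃ t : Fin m, t.val < T ∧ outcome n m a r t = some s := by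
  induction T with
  | zero => simp [occUpTo]
  | succ T ih =>
    by_cases h : T < m
    · rw [occUpTo_succ_of_lt h, mem_union, ih, Option.mem_toFinset, Option.mem_def]
      constructor
      · rintro (⟨t, ht, hts⟩ | hT)
        · exact ⟨t, by omega, hts⟩
        · exact ⟨⟨T, h⟩, by simp, hT⟩
      · rintro ⟨t, ht, hts⟩
        rcases Nat.lt_succ_iff_lt_or_eq.mp ht with ht | ht
        · exact Or.inl ⟨t, ht, hts⟩
        · obtain rfl : t = ⟨T, h⟩ := Fin.ext ht
          exact Or.inr hts
    · rw [occUpTo_succ_of_le (not_lt.mp h), ih]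
      exact exists_congr fun t => and_congr_left fun _ => by omega

theorem occUpTo_mono {T T' : ℕ} (hT : T ≤ T') : occUpTo n m a r T ⊆ occUpTo n m a r T' := by
  intro s hs
  obtain ⟨t, ht, hts⟩ := mem_occUpTo_iff.mp hs
  exact mem_occUpTo_iff.mpr ⟨t, by omega, hts⟩

theorem card_le_card_of_subset_occUpTo {T : ℕ} {S : Finset ℕ} (hS : S ⊆ occUpTo n m a r T) :
    #S ≤ #{t : Fin m | t.val < T ∧ ∃ s ∈ S, outcome n m a r t = some s} := by
  refine card_le_card_of_surjOn (fun t => (outcome n m a r t).getD 0) fun s hs => ?_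
  obtain ⟨t, ht, hts⟩ := mem_occUpTo_iff.mp (hS hs)
  exact ⟨t, by simpa using ⟨ht, s, hs, hts⟩, by simp [hts]⟩

theorem card_occUpTo_le (T : ℕ) : #(occUpTo n m a r T) ≤ T :=
  calc #(occUpTo n m a r T)
      ≤ #{t : Fin m | t.val < T ∧ ∃ s ∈ occUpTo n m a r T, outcome n m a r t = some s} :=
        card_le_card_of_subset_occUpTo subset_rfl
    _ ≤ #{t : Fin m | t.val < T} := card_le_card (monotone_filter_right _ fun _ _ h => h.1)
    _ ≤ T := by rw [Fin.card_filter_val_lt]; exact min_le_right _ _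

theorem card_occUpTo_of_allPark (hall : AllPark n m a r) {T : ℕ} (hT : T ≤ m) :
    #(occUpTo n m a r T) = T := by
  induction T with
  | zero => simp [occUpTo]
  | succ T ih =>
    have h : T < m := by omega
    obtain ⟨s, hs⟩ := Option.isSome_iff_exists.mp (hall ⟨T, h⟩)
    rw [occUpTo_succ_of_lt h, hs, Option.toFinset_some, union_singleton,
      card_insert_of_notMem (notMem_of_parkSpot_eq_some hs), ih (by omega)]

theorem le_card_filter_of_Icc_subset_occUpTo {i : Fin m} {j : ℕ} (hjn : j ≤ n + 1)
    (hS : Icc j n ⊆ occUpTo n m a r i)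
    (hpref : ∀ t : Fin m, t < i → ∀ s ∈ Icc j n, outcome n m a r t = some s → j ≤ a t)
    (hi : j ≤ a i) : n + 2 ≤ #{t | j ≤ a t} + j := by
  have hcars := (card_le_card_of_subset_occUpTo hS).trans
    (card_le_card (t := ({t | t < i ∧ j ≤ a t} : Finset (Fin m))) fun t => by
      simp only [mem_filter, mem_univ, true_and]
      rintro ⟨ht, s, hs, hts⟩
      exact ⟨ht, hpref t ht s hs hts⟩)
  have hins : insert i ({t | t < i ∧ j ≤ a t} : Finset (Fin m)) ⊆
      ({t | j ≤ a t} : Finset (Fin m)) := by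
    intro t
    simp only [mem_insert, mem_filter, mem_univ, true_and]
    rintro (rfl | ht)
    exacts [hi, ht.2]
  have := card_le_card hins
  rw [card_insert_of_notMem (by simp)] at this
  rw [Nat.card_Icc] at hcars
  omega

theorem Icc_subset_occUpTo_of_lt_outcome {T s : ℕ} {t : Fin m} (ht : t.val < T)
    (hts : outcome n m a r t = some s) (hlt : a t < s) (hsn : Icc s n ⊆ occUpTo n m a r T) :
    Icc (max 1 (a t - r t)) n ⊆ occUpTo n m a r T := by
  intro j hj
  rcases lt_or_ge j s with hjs | hjs
  · exact occUpTo_mono ht.le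
      (Ico_subset_of_parkSpot_eq_some_of_lt hts hlt (mem_Ico.mpr ⟨(mem_Icc.mp hj).1, hjs⟩))
  · exact hsn (mem_Icc.mpr ⟨hjs, (mem_Icc.mp hj).2⟩)

theorem occUpTo_subset_Icc {n m l T : ℕ} {a r : Fin m → ℕ} (hl : 1 ≤ l)
    (hpref : ∀ t : Fin m, t.val < T → a t ∈ Icc l n)
    (hroom : ∀ t : Fin m, t.val < T → a t < l + r t → l + t.val ≤ a t) :
    occUpTo n m a r T ⊆ Icc l n := by
  intro s hs
  obtain ⟨t, ht, hts⟩ := mem_occUpTo_iff.mp hs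
  exact parkSpot_mem_Icc_of_card_add_le hl (hpref t ht)
    (fun h => by have := card_occUpTo_le (n := n) (a := a) (r := r) t; have := hroom t ht h; omega)
    hts

end OccUpTo

section Uset

variable {n : ℕ} {a : Fin n → ℕ}

theorem mem_Uset_iff {j : ℕ} : j ∈ Uset n a ↔ j ∈ Icc 1 n ∧ n + 2 ≤ #{i | j ≤ a i} + j := by
  rw [Uset, mem_filter, ucount]
  constructor <;> rintro ⟨hj, h⟩ <;> refine ⟨hj, ?_⟩ <;> omega

theorem one_notMem_Uset : 1 ∉ Uset n a := fun h => by
  have := card_finset_fin_le {i | 1 ≤ a i}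
  have := (mem_Uset_iff.mp h).2
  omega

theorem card_filter_comp_perm (σ : Equiv.Perm (Fin n)) (P : Fin n → Prop) [DecidablePred P] :
    #{i | P (σ i)} = #{i | P i} :=
  card_equiv σ fun i => by simp

theorem Uset_comp (σ : Equiv.Perm (Fin n)) : Uset n (fun i => a (σ i)) = Uset n a := by
  ext j
  rw [mem_Uset_iff, mem_Uset_iff, card_filter_comp_perm σ (fun i => j ≤ a i)]

theorem maxInterval_comp (σ : Equiv.Perm (Fin n)) {p q : ℕ} :
    MaxInterval n (fun i => a (σ i)) p q ↔ MaxInterval n a p q := by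
  rw [MaxInterval, MaxInterval, Uset_comp]

theorem exists_maximal_Icc_superset {S : Finset ℕ} (h0 : 0 ∉ S) {M N : ℕ} (hMN : M ≤ N)
    (h : Icc M N ⊆ S) :
    ∃ p q, p ≤ M ∧ N ≤ q ∧ Icc p q ⊆ S ∧ p - 1 ∉ S ∧ q + 1 ∉ S := by
  have hlow : ∃ p, Icc p N ⊆ S := ⟨M, h⟩
  have hup : ∃ e, N + e + 1 ∉ S :=
    ⟨S.sup id, fun hm => by have := le_sup (f := id) hm; simp only [id] at this; omega⟩
  refine ⟨Nat.find hlow, N + Nat.find hup, Nat.find_min' hlow h, by omega, ?_, ?_,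
    Nat.find_spec hup⟩
  · intro j hj
    rw [mem_Icc] at hj
    rcases le_or_gt j N with hjN | hjN
    · exact Nat.find_spec hlow (mem_Icc.mpr ⟨hj.1, hjN⟩)
    · obtain ⟨e, rfl⟩ : ∃ e, j = N + e + 1 := ⟨j - N - 1, by omega⟩
      exact not_not.mp (Nat.find_min hup (by omega))
  · intro hp
    have hp0 : Nat.find hlow ≠ 0 := fun h' =>
      h0 (Nat.find_spec hlow (mem_Icc.mpr ⟨h' ▸ le_rfl, Nat.zero_le _⟩))
    refine Nat.find_min hlow (Nat.sub_one_lt hp0) fun j hj => ?_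
    rcases eq_or_ne j (Nat.find hlow - 1) with rfl | hj'
    · exact hp
    · rw [mem_Icc] at hj
      exact Nat.find_spec hlow (mem_Icc.mpr ⟨by omega, hj.2⟩)

theorem exists_maxInterval_of_Icc_subset {M N : ℕ} (hMN : M ≤ N) (h : Icc M N ⊆ Uset n a) :
    ∃ p q, MaxInterval n a p q ∧ p ≤ M ∧ N ≤ q := by
  have h0 : 0 ∉ Uset n a := fun h' => by simp [mem_Uset_iff] at h'
  obtain ⟨p, q, hpM, hNq, hpq, hp, hq⟩ := exists_maximal_Icc_superset h0 hMN h
  exact ⟨p, q, ⟨by omega, fun j hpj hjq => hpq (mem_Icc.mpr ⟨hpj, hjq⟩), hp, hq⟩, hpM, hNq⟩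

namespace MaxInterval

variable {p q : ℕ}

theorem left_mem (hmax : MaxInterval n a p q) : p ∈ Uset n a := hmax.2.1 p le_rfl hmax.1

theorem two_le (hmax : MaxInterval n a p q) : 2 ≤ p := by
  have hpU := hmax.left_mem
  have hp1 : p ≠ 1 := fun h => one_notMem_Uset (h ▸ hpU)
  have := (mem_Icc.mp (mem_Uset_iff.mp hpU).1).1
  omega

theorem card_filter_le_add (hmax : MaxInterval n a p q) : #{i | p ≤ a i} + p = n + 2 := by
  obtain ⟨hpn, hp⟩ := mem_Uset_iff.mp hmax.left_mem
  have hp2 := hmax.two_le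
  have hp1 : ¬ (n + 2 ≤ #{i | p - 1 ≤ a i} + (p - 1)) := fun h' =>
    hmax.2.2.1 (mem_Uset_iff.mpr ⟨mem_Icc.mpr ⟨by omega, by grind⟩, h'⟩)
  have hmono : #{i | p ≤ a i} ≤ #{i | p - 1 ≤ a i} :=
    card_le_card (monotone_filter_right _ fun _ _ h => by omega)
  omega

theorem card_filter_mem_Icc_add_le (hmax : MaxInterval n a p q) {d : ℕ} (hpd : p ≤ d)
    (hdq : d < q) :
    #{i | a i ∈ Icc p d} + p ≤ d + 1 := by
  have hd := mem_Uset_iff.mp (hmax.2.1 (d + 1) (by omega) hdq)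
  have hsplit : #{i | a i ∈ Icc p d} + #{i | d + 1 ≤ a i} = #{i | p ≤ a i} := by
    rw [← card_union_of_disjoint]
    · congr 1
      ext i
      simp only [mem_union, mem_filter, mem_univ, true_and, mem_Icc]
      omega
    · exact disjoint_filter.mpr fun i _ h => by rw [mem_Icc] at h; omega
  have := hmax.card_filter_le_add
  omega

end MaxInterval

end Uset

theorem exists_Icc_subset_Uset_of_not_naplesPF {n k : ℕ} {b : Fin n → ℕ} (hb : ∀ i, b i ≤ n)
    (h : ¬ NaplesPF n k b) : ∃ M, Icc M (M + k) ⊆ Uset n b := by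
  obtain ⟨i, hi⟩ : ∃ i, outcome n n b (fun _ => k) i = none := by
    simpa [NaplesPF, AllPark] using h
  set O := occUpTo n n b (fun _ => k) i
  have hfull : Icc (max 1 (b i - k)) n ⊆ O := Icc_subset_of_parkSpot_eq_none hi
  have hex : ∃ m, Icc m n ⊆ O := ⟨_, hfull⟩
  set M := Nat.find hex
  have hM : Icc M n ⊆ O := Nat.find_spec hex
  have hM2 : 2 ≤ M := by
    by_contra! hlt
    have hcard := (card_le_card ((Icc_subset_Icc_left (by omega : M ≤ 1)).trans hM)).trans
      (card_occUpTo_le (n := n) (a := b) (r := fun _ => k) i)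
    rw [Nat.card_Icc] at hcard
    omega
  have hMk : M + k ≤ b i := by
    rcases le_max_iff.mp (Nat.find_min' hex hfull) with h | h <;> omega
  -- A car that parked forward into `[M, n]` found `[max 1 (b t - k), n]` taken, so `M ≤ b t - k`.
  have hpref : ∀ t : Fin n, t < i → ∀ s, M ≤ s →
      outcome n n b (fun _ => k) t = some s → min s (M + k) ≤ b t := by
    intro t ht s hs hts
    by_contra! hlt
    have hwin := Nat.find_min' hex (Icc_subset_occUpTo_of_lt_outcome ht hts (by omega)
      ((Icc_subset_Icc_left hs).trans hM))
    rcases le_max_iff.mp hwin with h | h <;> omega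
  have hbi := hb i
  refine ⟨M, fun j hj => ?_⟩
  rw [mem_Icc] at hj
  refine mem_Uset_iff.mpr ⟨mem_Icc.mpr ⟨by omega, by omega⟩,
    le_card_filter_of_Icc_subset_occUpTo (by omega) ((Icc_subset_Icc_left hj.1).trans hM)
      (fun t ht s hs hts => ?_) (by omega)⟩
  rw [mem_Icc] at hs
  have := hpref t ht s (by omega) hts
  omega

theorem Monotone.le_of_lt_card_filter_le {n : ℕ} {α : Type*} [Preorder α] [DecidableLE α]
    {g : Fin n → α} (hg : Monotone g) {c : α} {i : Fin n} (hi : i.val < #{j | g j ≤ c}) :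
    g i ≤ c := by
  by_contra hic
  have hsub : ({j | g j ≤ c} : Finset (Fin n)) ⊆ Iio i := fun j hj => by
    simp only [mem_filter, mem_univ, true_and, mem_Iio] at hj ⊢
    by_contra! hij
    exact hic ((hg hij).trans hj)
  have := card_le_card hsub
  rw [Fin.card_Iio] at this
  omega

theorem exists_perm_sorted_prefix {n : ℕ} (a : Fin n → ℕ) (ha : ∀ i, a i ≤ n) (p : ℕ) :
    ∃ σ : Equiv.Perm (Fin n), ∀ t t' : Fin n, t' ≤ t → t.val < #{i | p ≤ a (σ i)} →
      p ≤ a (σ t') ∧ a (σ t') ≤ a (σ t) := by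
  set w : Fin n → ℕ := fun i => if p ≤ a i then a i else n + 1
  have hw : ∀ i, w i ≤ n ↔ p ≤ a i := fun i => by
    by_cases h : p ≤ a i <;> simp [w, h, ha i]
  have hwa : ∀ i, p ≤ a i → w i = a i := fun i h => if_pos h
  refine ⟨Tuple.sort w, fun t t' htt' ht => ?_⟩
  have hmono := Tuple.monotone_sort w
  have hcard : #{i | (w ∘ Tuple.sort w) i ≤ n} = #{i | p ≤ a (Tuple.sort w i)} := by
    simp only [Function.comp_apply, hw]
  have hwt := hmono.le_of_lt_card_filter_le (hcard ▸ ht)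
  have hwt' := (hmono htt').trans hwt
  simp only [Function.comp_apply] at hwt hwt' hmono
  rw [hw] at hwt hwt'
  refine ⟨hwt', ?_⟩
  rw [← hwa _ hwt, ← hwa _ hwt']
  exact hmono htt'

theorem not_naplesPF_of_maxInterval {n k p q : ℕ} {b : Fin n → ℕ} (hb : ∀ i, b i ≤ n)
    (hmax : MaxInterval n b p q) (hpq : p + k ≤ q)
    (hsorted : ∀ t t' : Fin n, t' ≤ t → t.val < #{i | p ≤ b i} → p ≤ b t' ∧ b t' ≤ b t) :
    ¬ NaplesPF n k b := by
  intro hpf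
  have hN := hmax.card_filter_le_add
  have hp2 := hmax.two_le
  have hpn := (mem_Icc.mp (mem_Uset_iff.mp hmax.left_mem).1).2
  -- Cars `0, …, t` all prefer spots in `[p, b t]`, and at most `b t + 1 - p` cars do so,
  -- as `b t + 1 ∈ [p, q]`.
  have hroom : ∀ t : Fin n, t.val < #{i | p ≤ b i} → b t < p + k → p + t.val ≤ b t := by
    intro t ht hbt
    have hsub : Iic t ⊆ ({i | b i ∈ Icc p (b t)} : Finset (Fin n)) := fun t' ht' => by
      simpa using hsorted t t' (mem_Iic.mp ht') ht
    have := card_le_card hsub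
    rw [Fin.card_Iic] at this
    have := hmax.card_filter_mem_Icc_add_le (hsorted t t le_rfl ht).1 (by omega)
    omega
  have hsub := occUpTo_subset_Icc (n := n) (r := fun _ => k) (T := #{i | p ≤ b i}) (by omega)
    (fun t ht => mem_Icc.mpr ⟨(hsorted t t le_rfl ht).1, hb t⟩) hroom
  have := card_le_card hsub
  rw [card_occUpTo_of_allPark hpf (by omega), Nat.card_Icc] at this
  omega

theorem exists_perm_not_naplesPF {n k p q : ℕ} {a : Fin n → ℕ} (ha : ∀ i, a i ≤ n)
    (hmax : MaxInterval n a p q) (hpq : p + k ≤ q) :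
    ∃ σ : Equiv.Perm (Fin n), ¬ NaplesPF n k (fun i => a (σ i)) := by
  obtain ⟨σ, hσ⟩ := exists_perm_sorted_prefix a ha p
  have hmax' := (maxInterval_comp σ).mpr hmax
  exact ⟨σ, not_naplesPF_of_maxInterval (fun i => ha (σ i)) hmax' hpq hσ⟩

theorem statement14_general (n k : ℕ) (a : Fin n → ℕ)
    (ha : ∀ i, a i ∈ Finset.Icc 1 n) :
    (∀ p q, MaxInterval n a p q → q - p + 1 ≤ k) ↔
      (∀ σ : Equiv.Perm (Fin n), NaplesPF n k (fun i => a (σ i))) := by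
  have ha' : ∀ i, a i ≤ n := fun i => (mem_Icc.mp (ha i)).2
  constructor
  · intro h σ
    by_contra hσ
    obtain ⟨M, hM⟩ := exists_Icc_subset_Uset_of_not_naplesPF (fun i => ha' (σ i)) hσ
    rw [Uset_comp] at hM
    obtain ⟨p, q, hmax, hpM, hqM⟩ := exists_maxInterval_of_Icc_subset (Nat.le_add_right M k) hM
    have := h p q hmax
    omega
  · intro h p q hmax
    by_contra! hlen
    obtain ⟨σ, hσ⟩ := exists_perm_not_naplesPF (k := k) ha' hmax (by have := hmax.1; omega)
    exact hσ (h σ)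

/-- every maximal interval `[p,q]` of `U_α` has length `≤ k` iff
every rearrangement of `α` is a `k`-Naples parking function. -/
theorem statement14 (n k : ℕ) (hn : 1 ≤ n) (hk : 1 ≤ k) (a : Fin n → ℕ)
    (ha : ∀ i, a i ∈ Finset.Icc 1 n) :
    (∀ p q, MaxInterval n a p q → q - p + 1 ≤ k) ↔
      (∀ σ : Equiv.Perm (Fin n), NaplesPF n k (fun i => a (σ i))) :=
  statement14_general n k a ha
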